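/- (S_2^≠, S_2^≠, [0, 1/2), [1/2, ∞))↓ holds: from every configuration in which robot r satisfies condition S_2^≠ with observed distance less than 1/2 and robot s satisfies condition S_2^≠ with observed distance at least 1/2, every fair SSynch execution of Algorithm 1 solves rendezvous. -/

import Mathlib

/-- Points in the plane. -/
abbrev Pt := EuclideanSpace ℝ (Fin 2)

/-- Observed directions. -/
inductive Dir | left | right
deriving DecidableEq

/-- The six internal states of Algorithm 1. -/
inductive St | start | s1 | s2 (d : Dir) | s3 | finish
deriving DecidableEq

/-- A local coordinate frame: an orthogonal linear map of the plane. -/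
abbrev Frame := Pt ≃ₗᵢ[ℝ] Pt

/-- Observed direction of a local vector `v`: `right` if its first coordinate is
positive, or is zero with positive second coordinate; `left` otherwise. -/
noncomputable def obsDir (v : Pt) : Dir :=
  if 0 < v 0 ∨ (v 0 = 0 ∧ 0 < v 1) then Dir.right else Dir.left

/-- Local vector observed by a robot with unit distance `u` and frame `A`,
located at `p`, looking at the other robot at `q`. -/
noncomputable def obsVec (u : ℝ) (A : Frame) (p q : Pt) : Pt := u⁻¹ • (A (q - p))

/-- Observed distance. -/
noncomputable def obsDist (u : ℝ) (p q : Pt) : ℝ := ‖q - p‖ / u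

/-- Algorithm 1: given the current state, the observed distance `d` and the
observed direction `dir`, returns the new state and the coefficient `μ` such
that the (global) destination is `p + μ • (q - p)` (i.e. local destination `μ • v`). -/
noncomputable def algo1 (s : St) (d : ℝ) (dir : Dir) : St × ℝ :=
  if d = 0 then (s, 0)
  else match s with
  | .start => if d < 1 then (.s1, 1 - 1/d) else (.s2 dir, 1)
  | .s1 => if d ≤ 1 then (.finish, 0) else (.s2 dir, 1)
  | .s2 d' =>
      if dir = d' then (.finish, 1)
      else if d < 1/2 then (.finish, 0)
      else if d < 1 then (.s3, 1/2)
      else (.s2 d', 1/2)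
  | .s3 => if d < 1/4 then (.finish, 0) else (.finish, 1)
  | .finish => if d ≤ 1 then (.finish, 0) else (.finish, 1)

/-- A configuration: positions and internal states of the two robots
(robot `r` is `false`, robot `s` is `true`). -/
structure Config where
  pos : Bool → Pt
  st : Bool → St

/-- Result (new position, new state) of one activation of robot `i`. -/
noncomputable def stepRobot (u : Bool → ℝ) (A : Bool → Frame) (c : Config) (i : Bool) :
    Pt × St :=
  let p := c.pos i
  let q := c.pos (!i)
  let d := obsDist (u i) p q
  let dir := obsDir (obsVec (u i) (A i) p q)
  let r := algo1 (c.st i) d dir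
  (p + r.2 • (q - p), r.1)

/-- One synchronous round in which exactly the robots `i` with `act i = true`
are activated; both activated robots observe the same (pre-round) configuration,
and rigidly reach their computed destinations. -/
noncomputable def stepConfig (u : Bool → ℝ) (A : Bool → Frame) (act : Bool → Bool)
    (c : Config) : Config where
  pos i := if act i then (stepRobot u A c i).1 else c.pos i
  st i := if act i then (stepRobot u A c i).2 else c.st i

/-- The configuration after `n` rounds of the SSynch execution of Algorithm 1
under schedule `sched`, starting from `c0`. -/
noncomputable def run (u : Bool → ℝ) (A : Bool → Frame) (sched : ℕ → Bool → Bool)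
    (c0 : Config) : ℕ → Config
  | 0 => c0
  | n + 1 => stepConfig u A (sched n) (run u A sched c0 n)

/-- A legal fair SSynch schedule: at every round a nonempty set of robots is
activated, and each robot is activated infinitely often. -/
def FairSched (sched : ℕ → Bool → Bool) : Prop :=
  (∀ n, sched n false = true ∨ sched n true = true) ∧
  (∀ i n, ∃ m, n ≤ m ∧ sched m i = true)

/-- Rendezvous is solved: from some round on, the two robots occupy the same
point and never move again. -/
noncomputable def Solves (u : Bool → ℝ) (A : Bool → Frame) (sched : ℕ → Bool → Bool)
    (c0 : Config) : Prop :=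
  ∃ N : ℕ, ∀ n, N ≤ n → ∀ i, (run u A sched c0 n).pos i = (run u A sched c0 N).pos false

/-- Conditions on a robot: one of the six internal states, or `S₂⁼` / `S₂≠`. -/
inductive Cond | start | s1 | s2 (d : Dir) | s2eq | s2ne | s3 | finish

/-- A robot in state `s` whose currently observed direction is `dir`
satisfies the condition. -/
def Cond.sat : Cond → St → Dir → Prop
  | .start, s, _ => s = .start
  | .s1, s, _ => s = .s1
  | .s2 d', s, _ => s = .s2 d'
  | .s2eq, s, dir => s = .s2 dir
  | .s2ne, s, dir => ∃ d', s = St.s2 d' ∧ d' ≠ dir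
  | .s3, s, _ => s = .s3
  | .finish, s, _ => s = .finish

/-- `(S_a, S_b, I_a, I_b)↓` : for every choice of the units and frames, from
every configuration in which robot `r` satisfies condition `Ca` with observed
distance in `Ia` and robot `s` satisfies condition `Cb` with observed distance
in `Ib`, every fair SSynch execution of Algorithm 1 solves Rendezvous. -/
noncomputable def Down (Ca Cb : Cond) (Ia Ib : Set ℝ) : Prop :=
  ∀ (u : Bool → ℝ) (A : Bool → Frame), (∀ i, 0 < u i) →
    ∀ c0 : Config,
      Ca.sat (c0.st false)
        (obsDir (obsVec (u false) (A false) (c0.pos false) (c0.pos true))) →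
      obsDist (u false) (c0.pos false) (c0.pos true) ∈ Ia →
      Cb.sat (c0.st true)
        (obsDir (obsVec (u true) (A true) (c0.pos true) (c0.pos false))) →
      obsDist (u true) (c0.pos true) (c0.pos false) ∈ Ib →
      ∀ sched : ℕ → Bool → Bool, FairSched sched → Solves u A sched c0


/-!
Robot `r` starts closer than `1/2` (in its own unit) with a stale direction, so every activation
of `r` either finishes it without moving or leaves it finished; `r` never moves. Robot `s` stays on
the segment towards `r`, and each of its activations in `S₂` halves its distance, until it has
observed distance in `[1/4, 1/2)` in state `S₃`, from where it jumps onto `r`. Fairness supplies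
enough activations of `s`.
-/

lemma obsDir_smul {c : ℝ} (hc : 0 < c) (v : Pt) : obsDir (c • v) = obsDir v := by
  simp only [obsDir, PiLp.smul_apply, smul_eq_mul, mul_pos_iff_of_pos_left hc,
    mul_eq_zero, hc.ne', false_or]

lemma obsDist_of_sub_eq_smul {u t : ℝ} {p q p' q' : Pt} (h : q' - p' = t • (q - p))
    (ht : 0 ≤ t) : obsDist u p' q' = t * obsDist u p q := by
  rw [obsDist, obsDist, h, norm_smul, Real.norm_of_nonneg ht, mul_div_assoc]

lemma obsDir_obsVec_of_sub_eq_smul {u t : ℝ} {A : Frame} {p q p' q' : Pt}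
    (h : q' - p' = t • (q - p)) (ht : 0 < t) :
    obsDir (obsVec u A p' q') = obsDir (obsVec u A p q) := by
  rw [obsVec, obsVec, h, map_smul, smul_comm, obsDir_smul ht]

def RPhase (dr : Dir) (st : St) : Prop :=
  st = .s2 dr ∨ st = .finish

def SPhase (ds : Dir) (st : St) (d : ℝ) : Prop :=
  (st = .s2 ds ∧ 1/2 ≤ d) ∨ (st = .s3 ∧ 1/4 ≤ d ∧ d < 1/2) ∨ (st = .finish ∧ d = 0)

lemma SPhase.eq_zero_of_lt {ds : Dir} {st : St} {d : ℝ} (h : SPhase ds st d) (hd : d < 1/4) :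
    d = 0 := by
  rcases h with ⟨-, h⟩ | ⟨-, h, -⟩ | ⟨-, h⟩ <;> first | exact h | linarith

lemma algo1_of_rPhase {dr dir : Dir} {st : St} {d : ℝ} (hst : RPhase dr st) (hd : d < 1/2)
    (hdir : d ≠ 0 → dir ≠ dr) :
    (algo1 st d dir).2 = 0 ∧ RPhase dr (algo1 st d dir).1 := by
  by_cases hd0 : d = 0
  · simpa [algo1, hd0] using hst
  have hd1 : d ≤ 1 := by linarith
  rcases hst with rfl | rfl
  · simp only [algo1, hd0, hdir hd0, hd, if_false, if_true]
    simp [RPhase]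
  · simp only [algo1, hd0, hd1, if_false, if_true]
    simp [RPhase]

/-- With `μ := (algo1 st d dir).2`, robot `s` ends at observed distance `(1 - μ) * d` from `r`. -/
lemma algo1_of_sPhase {ds dir : Dir} {st : St} {d : ℝ} (hst : SPhase ds st d)
    (hdir : d ≠ 0 → dir ≠ ds) :
    (d = 0 ∨ 1/2 ≤ (algo1 st d dir).2) ∧ (algo1 st d dir).2 ≤ 1 ∧
      SPhase ds (algo1 st d dir).1 ((1 - (algo1 st d dir).2) * d) := by
  rcases hst with ⟨rfl, hd⟩ | ⟨rfl, hd, hd'⟩ | ⟨rfl, rfl⟩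
  · have hd0 : d ≠ 0 := by linarith
    have hne : dir ≠ ds := hdir hd0
    have hnlt : ¬ d < 1/2 := not_lt.2 hd
    by_cases hd1 : d < 1
    · simp only [algo1, hd0, hne, hnlt, hd1, if_false, if_true]
      exact ⟨Or.inr le_rfl, by norm_num, Or.inr (Or.inl ⟨rfl, by linarith, by linarith⟩)⟩
    · simp only [algo1, hd0, hne, hnlt, hd1, if_false]
      exact ⟨Or.inr le_rfl, by norm_num, Or.inl ⟨rfl, by linarith⟩⟩
  · have hd0 : d ≠ 0 := by linarith
    simp only [algo1, hd0, not_lt.2 hd, if_false]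
    exact ⟨Or.inr (by norm_num), le_rfl, Or.inr (Or.inr ⟨rfl, by ring⟩)⟩
  · simp [algo1, SPhase]

/-- Robot `r` sits at `p` and robot `s` at the point `p + t • (q - p)` of the segment `[p, q]`,
where `p`, `q` are the initial positions. -/
def Approach (u : Bool → ℝ) (p q : Pt) (dr ds : Dir) (c : Config) (t : ℝ) : Prop :=
  c.pos false = p ∧ c.pos true = p + t • (q - p) ∧ 0 ≤ t ∧ t ≤ 1 ∧
    RPhase dr (c.st false) ∧ SPhase ds (c.st true) (t * obsDist (u true) q p)

section Approach

variable {u : Bool → ℝ} {A : Bool → Frame} {p q : Pt} {dr ds : Dir}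

lemma stepRobot_false_of_approach {c : Config} {t : ℝ}
    (hdr : dr ≠ obsDir (obsVec (u false) (A false) p q)) (hdist : obsDist (u false) p q < 1/2)
    (hc : Approach u p q dr ds c t) :
    (stepRobot u A c false).1 = p ∧ RPhase dr (stepRobot u A c false).2 := by
  obtain ⟨hp, hq, ht0, ht1, hr, -⟩ := hc
  have hsub : c.pos true - c.pos false = t • (q - p) := by rw [hp, hq, add_sub_cancel_left]
  have hd := obsDist_of_sub_eq_smul (u := u false) hsub ht0
  have hlt : t * obsDist (u false) p q < 1/2 := by
    rcases le_or_gt 0 (obsDist (u false) p q) with h | h <;> nlinarith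
  have hdir : t * obsDist (u false) p q ≠ 0 →
      obsDir (obsVec (u false) (A false) (c.pos false) (c.pos true)) ≠ dr := by
    intro h
    rw [obsDir_obsVec_of_sub_eq_smul hsub (lt_of_le_of_ne ht0 (by rintro rfl; simp at h))]
    exact hdr.symm
  obtain ⟨hμ, hst⟩ := algo1_of_rPhase hr hlt hdir
  simp only [stepRobot, Bool.not_false, hd]
  rw [hμ, zero_smul, add_zero]
  exact ⟨hp, hst⟩

lemma stepRobot_true_of_approach {c : Config} {t : ℝ}
    (hds : ds ≠ obsDir (obsVec (u true) (A true) q p)) (hdist : 0 < obsDist (u true) q p)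
    (hc : Approach u p q dr ds c t) :
    ∃ t', 0 ≤ t' ∧ t' ≤ t / 2 ∧ (stepRobot u A c true).1 = p + t' • (q - p) ∧
      SPhase ds (stepRobot u A c true).2 (t' * obsDist (u true) q p) := by
  obtain ⟨hp, hq, ht0, -, -, hs⟩ := hc
  have hsub : c.pos false - c.pos true = t • (p - q) := by rw [hp, hq]; module
  have hd := obsDist_of_sub_eq_smul (u := u true) hsub ht0
  have hdir : t * obsDist (u true) q p ≠ 0 →
      obsDir (obsVec (u true) (A true) (c.pos true) (c.pos false)) ≠ ds := by
    intro h
    rw [obsDir_obsVec_of_sub_eq_smul hsub (lt_of_le_of_ne ht0 (by rintro rfl; simp at h))]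
    exact hds.symm
  obtain ⟨hμ, hμ1, hst⟩ := algo1_of_sPhase hs hdir
  simp only [stepRobot, Bool.not_true, hd]
  generalize algo1 _ _ _ = r at hμ hμ1 hst ⊢
  refine ⟨(1 - r.2) * t, by nlinarith, ?_, by rw [hsub, hq]; module, by rwa [mul_assoc]⟩
  rcases hμ with h | h
  · obtain rfl : t = 0 := (mul_eq_zero.1 h).resolve_right hdist.ne'
    simp
  · nlinarith

lemma approach_stepConfig {act : Bool → Bool} {c : Config} {t : ℝ}
    (hdr : dr ≠ obsDir (obsVec (u false) (A false) p q)) (hdr' : obsDist (u false) p q < 1/2)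
    (hds : ds ≠ obsDir (obsVec (u true) (A true) q p)) (hds' : 0 < obsDist (u true) q p)
    (hc : Approach u p q dr ds c t) :
    ∃ t', Approach u p q dr ds (stepConfig u A act c) t' ∧
      t' ≤ if act true then t / 2 else t := by
  obtain ⟨hpr, hstr⟩ := stepRobot_false_of_approach hdr hdr' hc
  obtain ⟨t', ht0', ht', hps, hsts⟩ := stepRobot_true_of_approach hds hds' hc
  obtain ⟨hp, hq, ht0, ht1, hr, hs⟩ := hc
  have hr_step : (stepConfig u A act c).pos false = p ∧
      RPhase dr ((stepConfig u A act c).st false) := by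
    simp only [stepConfig]
    split_ifs
    exacts [⟨hpr, hstr⟩, ⟨hp, hr⟩]
  cases hact : act true
  · refine ⟨t, ⟨hr_step.1, ?_, ht0, ht1, hr_step.2, ?_⟩, by simp⟩ <;>
      simpa [stepConfig, hact]
  · refine ⟨t', ⟨hr_step.1, ?_, ht0', by linarith, hr_step.2, ?_⟩, by simpa⟩ <;>
      simpa [stepConfig, hact]

lemma approach_run {sched : ℕ → Bool → Bool} {c0 : Config}
    (hdr : dr ≠ obsDir (obsVec (u false) (A false) p q)) (hdr' : obsDist (u false) p q < 1/2)
    (hds : ds ≠ obsDir (obsVec (u true) (A true) q p)) (hds' : 0 < obsDist (u true) q p)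
    (h0 : Approach u p q dr ds c0 1) (n : ℕ) :
    ∃ t, Approach u p q dr ds (run u A sched c0 n) t ∧
      t ≤ (1/2) ^ Nat.count (fun m => sched m true = true) n := by
  induction n with
  | zero => exact ⟨1, h0, by simp⟩
  | succ n ih =>
    obtain ⟨t, hc, ht⟩ := ih
    obtain ⟨t', hc', ht'⟩ := approach_stepConfig hdr hdr' hds hds' hc
    refine ⟨t', hc', ?_⟩
    rw [Nat.count_succ]
    split_ifs at ht' with hact
    · rw [if_pos hact, pow_succ]; linarith
    · rw [if_neg hact, add_zero]; linarith

lemma solves_of_approach {sched : ℕ → Bool → Bool} {c0 : Config}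
    (hdr : dr ≠ obsDir (obsVec (u false) (A false) p q)) (hdr' : obsDist (u false) p q < 1/2)
    (hds : ds ≠ obsDir (obsVec (u true) (A true) q p)) (hds' : 0 < obsDist (u true) q p)
    (h0 : Approach u p q dr ds c0 1) (hfair : ∀ n, ∃ m, n ≤ m ∧ sched m true = true) :
    Solves u A sched c0 := by
  set count := Nat.count (fun m => sched m true = true)
  obtain ⟨K, hK⟩ : ∃ K : ℕ, (1/2 : ℝ) ^ K < 1/4 / obsDist (u true) q p :=
    exists_pow_lt_of_lt_one (by positivity) (by norm_num)
  obtain ⟨N, hN⟩ : ∃ N, count N = K := Nat.surjective_count_of_infinite_setOfPred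
    (Nat.frequently_atTop_iff_infinite.1 (Filter.frequently_atTop.2 hfair)) K
  have hmeet : ∀ n, N ≤ n → ∀ i, (run u A sched c0 n).pos i = p := by
    intro n hn i
    obtain ⟨t, ⟨hp, hq, ht0, -, -, hs⟩, ht⟩ := approach_run hdr hdr' hds hds' h0 n
    have hsmall : t * obsDist (u true) q p < 1/4 := by
      have : t < 1/4 / obsDist (u true) q p := calc
        t ≤ (1/2) ^ count n := ht
        _ ≤ (1/2) ^ K := pow_le_pow_of_le_one (by norm_num) (by norm_num)
            (hN ▸ Nat.count_monotone _ hn)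
        _ < _ := hK
      rwa [lt_div_iff₀ hds'] at this
    obtain rfl : t = 0 := (mul_eq_zero.1 (hs.eq_zero_of_lt hsmall)).resolve_right hds'.ne'
    cases i
    · exact hp
    · rw [hq, zero_smul, add_zero]
  exact ⟨N, fun n hn i => by rw [hmeet n hn i, hmeet N le_rfl false]⟩

end Approach

/-- Lemma 7: `(S_2^≠, S_2^≠, [0, 1/2), [1/2, ∞))↓`. -/
theorem lemma_l8 :
    Down Cond.s2ne Cond.s2ne (Set.Ico (0 : ℝ) (1/2)) (Set.Ici (1/2 : ℝ)) := by
  rintro u A - c0 ⟨dr, hdr, hdr_ne⟩ ⟨-, hdr'⟩ ⟨ds, hds, hds_ne⟩ hds' sched hfair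
  rw [Set.mem_Ici] at hds'
  refine solves_of_approach hdr_ne hdr' hds_ne (by linarith) ?_ (hfair.2 true)
  refine ⟨rfl, by rw [one_smul, add_sub_cancel], zero_le_one, le_rfl, Or.inl hdr, Or.inl ⟨hds, ?_⟩⟩
  rwa [one_mul]
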